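/- Let X be a γ-HDX, i ≥ 1, and f̃ ∈ C^i perpendicular to constant functions and supported on faces containing a fixed r ∈ X(i−1). Then ⟨U_{i−1}D_i f̃, f̃⟩ ≤ ((i+1)/i)·γ·‖f̃‖². -/
import Mathlib


open Finset

noncomputable section

/-- A pure `d`-dimensional weighted simplicial complex on a finite vertex set `V`:
a nonempty collection of top faces, each of cardinality `d+1`, together with a
probability distribution on the top faces which is positive on them.  (Faces of
cardinality `j` correspond to faces of dimension `j-1`, i.e. of level `j-1`, in
the paper's indexing; the empty face has level `-1`.) -/
structure WSC (V : Type) [DecidableEq V] [Fintype V] (d : ℕ) : Type where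
  top : Finset (Finset V)
  top_nonempty : top.Nonempty
  pure : ∀ s ∈ top, s.card = d + 1
  w : Finset V → ℝ
  w_pos : ∀ s ∈ top, 0 < w s
  w_supp : ∀ s, s ∉ top → w s = 0
  w_sum : ∑ s ∈ top, w s = 1

namespace WSC

variable {V : Type} [DecidableEq V] [Fintype V] {d : ℕ} (X : WSC V d)

/-- The faces of cardinality `j`, i.e. the set `X(j-1)` in the paper's indexing. -/
def faces (j : ℕ) : Finset (Finset V) :=
  (Finset.univ : Finset V).powerset.filter (fun t => t.card = j ∧ ∃ s ∈ X.top, t ⊆ s)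

/-- All faces of the complex. -/
def allFaces : Finset (Finset V) :=
  (Finset.univ : Finset V).powerset.filter (fun t => ∃ s ∈ X.top, t ⊆ s)

/-- The induced distribution `Dist_{j-1}` on the faces of cardinality `j`:
choose a top face according to `w` and then a uniformly random subset of
cardinality `j` of it. -/
def dist (j : ℕ) (t : Finset V) : ℝ :=
  (∑ s ∈ X.top.filter (fun s => t ⊆ s), X.w s) / (d + 1).choose j

/-- The weighted inner product on the space `C^{j-1}` of functions on the faces
of cardinality `j`. -/
def ip (j : ℕ) (f g : Finset V → ℝ) : ℝ :=
  ∑ t ∈ X.faces j, X.dist j t * f t * g t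

/-- The up (averaging) operator `U_{j-1}` sending functions on cardinality-`j`
faces to functions on cardinality-`(j+1)` faces. -/
def up (_X : WSC V d) (j : ℕ) (g : Finset V → ℝ) : Finset V → ℝ :=
  fun s => (∑ x ∈ s, g (s.erase x)) / ((j : ℝ) + 1)

/-- The down (averaging) operator `D_{j-1}` sending functions on cardinality-`j`
faces to functions on cardinality-`(j-1)` faces. -/
def down (j : ℕ) (f : Finset V → ℝ) : Finset V → ℝ :=
  fun t => (∑ s ∈ (X.faces j).filter (fun s => t ⊆ s), X.dist j s * f s) /
    ((j : ℝ) * X.dist (j - 1) t)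

/-- `m`-fold iterate of the up operator, starting from cardinality `j`. -/
def upIter (X : WSC V d) (j : ℕ) : ℕ → (Finset V → ℝ) → (Finset V → ℝ)
  | 0, g => g
  | (m+1), g => X.up (j + m) (upIter X j m g)

/-- `ys s` is the indicator function of containing the face `s`. -/
def ys (s t : Finset V) : ℝ := if s ⊆ t then 1 else 0

/-- `ys s` viewed as a function on the top faces `X(d)` (zero elsewhere). -/
def ysRes (s : Finset V) : Finset V → ℝ :=
  fun r => if r ∈ X.faces (d + 1) ∧ s ⊆ r then 1 else 0

/-- `X` is proper: all the up operators `U_i`, `-1 ≤ i ≤ d-1`, have trivial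
kernel (as operators on functions supported on the faces). -/
def Proper : Prop :=
  ∀ j, j ≤ d → ∀ g : Finset V → ℝ,
    (∀ t, t ∉ X.faces j → g t = 0) →
    (∀ s ∈ X.faces (j + 1), X.up j g s = 0) →
    ∀ t, g t = 0

/-- `h` is a harmonic function at cardinality `j`, i.e. an element of
`H^{j-1} = ker D_{j-1}` (for `j = 0` this is all of `C^{-1}`). -/
def Harmonic (j : ℕ) (h : Finset V → ℝ) : Prop :=
  (∀ t, t ∉ X.faces j → h t = 0) ∧
  (1 ≤ j → ∀ t ∈ X.faces (j - 1), X.down j h t = 0)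

/-- The non-lazy upper random walk `M⁺_{j-1}` on functions on cardinality-`j`
faces: go up to a random cardinality-`(j+1)` face and back down to a distinct
cardinality-`j` face. -/
def Mplus (j : ℕ) (f : Finset V → ℝ) : Finset V → ℝ :=
  fun t => ∑ s ∈ (X.faces (j + 1)).filter (fun s => t ⊆ s),
    (X.dist (j + 1) s / (((j : ℝ) + 1) * X.dist j t)) *
      ((∑ x ∈ t, f (s.erase x)) / (j : ℝ))

/-- The lower random walk `U_{j-2} D_{j-1}` on functions on cardinality-`j` faces. -/
def lower (j : ℕ) (f : Finset V → ℝ) : Finset V → ℝ :=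
  fun t => X.up (j - 1) (X.down j f) t

/-- `X` is a `γ`-high-dimensional expander: `‖M⁺_j - U_{j-1} D_j‖ ≤ γ` for all
paper levels `0 ≤ j ≤ d-1`, where the operator norm is with respect to the
weighted `L²` structure, expressed via quadratic forms. -/
def IsHDX (γ : ℝ) : Prop :=
  ∀ j, j + 1 ≤ d → ∀ f : Finset V → ℝ,
    X.ip (j + 1) (fun t => X.Mplus (j + 1) f t - X.lower (j + 1) f t)
      (fun t => X.Mplus (j + 1) f t - X.lower (j + 1) f t)
    ≤ γ ^ 2 * X.ip (j + 1) f f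

/-- The probability that a random cardinality-`m` face contains `r`. -/
def distAbove (m : ℕ) (r : Finset V) : ℝ :=
  ∑ s ∈ (X.faces m).filter (fun s => r ⊆ s), X.dist m s

/-- Expectation of a vertex function of the link of `r` under the link's vertex
distribution. -/
def linkEv (r : Finset V) (f : V → ℝ) : ℝ :=
  ∑ s ∈ (X.faces (r.card + 1)).filter (fun s => r ⊆ s),
    (X.dist (r.card + 1) s / X.distAbove (r.card + 1) r) * ∑ x ∈ s \ r, f x

/-- Expectation of `f(x) · g(y)` over a uniformly oriented random edge `(x,y)`
of the underlying graph of the link of `r`, i.e. the quadratic form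
`⟨f, A_r g⟩` of the link's adjacency operator. -/
def linkEe (r : Finset V) (f g : V → ℝ) : ℝ :=
  ∑ s ∈ (X.faces (r.card + 2)).filter (fun s => r ⊆ s),
    (X.dist (r.card + 2) s / X.distAbove (r.card + 2) r) *
      ((∑ x ∈ s \ r, ∑ y ∈ (s \ r).erase x, f x * g y) / 2)

/-- The two-sided spectral bound `λ(A_r) ≤ γ` for the underlying graph of the
link of `r`, in its equivalent quadratic-form formulation
`|⟨f, A_r g⟩ - E[f]·E[g]| ≤ γ‖f‖‖g‖`. -/
def LinkBound (r : Finset V) (γ : ℝ) : Prop :=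
  ∀ f g : V → ℝ,
    |X.linkEe r f g - X.linkEv r f * X.linkEv r g| ≤
      γ * Real.sqrt (X.linkEv r (fun x => f x ^ 2)) *
        Real.sqrt (X.linkEv r (fun x => g x ^ 2))

/-- `X` is a `γ`-two-sided link expander: every link (with a nonempty underlying
graph) satisfies `λ(A_r) ≤ γ`. -/
def TwoSidedLinkExpander (γ : ℝ) : Prop :=
  ∀ r ∈ X.allFaces, r.card + 2 ≤ d + 1 → X.LinkBound r γ

end WSC

namespace WSC

variable {V : Type} [DecidableEq V] [Fintype V] {d : ℕ} (X : WSC V d)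

lemma w_nonneg' (s : Finset V) : 0 ≤ X.w s := by
  by_cases h : s ∈ X.top
  · exact (X.w_pos s h).le
  · rw [X.w_supp s h]

lemma dist_nonneg' (j : ℕ) (t : Finset V) : 0 ≤ X.dist j t := by
  unfold WSC.dist
  apply div_nonneg
  · exact Finset.sum_nonneg fun s _ => X.w_nonneg' s
  · positivity

lemma card_of_mem_faces' {j : ℕ} {t : Finset V} (h : t ∈ X.faces j) : t.card = j := by
  simp only [WSC.faces, Finset.mem_filter] at h
  exact h.2.1

lemma dist_pos' {j : ℕ} {t : Finset V} (hj : j ≤ d + 1) (h : t ∈ X.faces j) :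
    0 < X.dist j t := by
  simp only [WSC.faces, Finset.mem_filter] at h
  obtain ⟨s, hs, hts⟩ := h.2.2
  unfold WSC.dist
  apply div_pos
  · apply Finset.sum_pos
    · intro u hu
      exact X.w_pos u (Finset.mem_filter.mp hu).1
    · exact ⟨s, Finset.mem_filter.mpr ⟨hs, hts⟩⟩
  · exact_mod_cast Nat.choose_pos hj

lemma down_ind' {i : ℕ} {t u : Finset V} (ht : t ∈ X.faces (i + 1)) (hu : u ⊆ t) :
    X.down (i + 1) (fun s => if s = t then (1 : ℝ) else 0) u
      = X.dist (i + 1) t / (((i : ℝ) + 1) * X.dist i u) := by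
  unfold WSC.down
  rw [Finset.sum_eq_single t]
  · simp only [if_pos rfl, mul_one, Nat.add_sub_cancel]
    push_cast
    ring
  · intro s _ hst
    simp [hst]
  · intro h
    exact absurd (Finset.mem_filter.mpr ⟨ht, hu⟩) h

lemma mplus_ind_zero' {i : ℕ} {t : Finset V} :
    X.Mplus (i + 1) (fun s => if s = t then (1 : ℝ) else 0) t = 0 := by
  unfold WSC.Mplus
  apply Finset.sum_eq_zero
  intro s _
  have h0 : ∀ x ∈ t, (if s.erase x = t then (1 : ℝ) else 0) = 0 := by
    intro x hx
    rw [if_neg]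
    intro h
    exact (Finset.notMem_erase x s) (h ▸ hx)
  rw [Finset.sum_congr rfl h0, Finset.sum_const, smul_zero, zero_div, mul_zero]

lemma lower_ind' {i : ℕ} {t : Finset V} (ht : t ∈ X.faces (i + 1)) :
    X.lower (i + 1) (fun s => if s = t then (1 : ℝ) else 0) t
      = (∑ x ∈ t, X.dist (i + 1) t / (((i : ℝ) + 1) * X.dist i (t.erase x)))
          / ((i : ℝ) + 1) := by
  unfold WSC.lower WSC.up
  simp only [Nat.add_sub_cancel]
  congr 1
  apply Finset.sum_congr rfl
  intro x _
  exact X.down_ind' ht (Finset.erase_subset x t)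

lemma return_le' {i : ℕ} (γ : ℝ) (hγ0 : 0 ≤ γ) (hX : X.IsHDX γ) (hid : i + 1 ≤ d)
    {t : Finset V} (ht : t ∈ X.faces (i + 1)) :
    X.lower (i + 1) (fun s => if s = t then (1 : ℝ) else 0) t ≤ γ := by
  set g : Finset V → ℝ := fun s => if s = t then 1 else 0 with hg
  have hdx := hX i hid g
  have hgg : X.ip (i + 1) g g = X.dist (i + 1) t := by
    unfold WSC.ip
    rw [Finset.sum_eq_single t]
    · simp [hg]
    · intro s _ hst
      simp [hg, hst]
    · intro h
      exact absurd ht h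
  set h : Finset V → ℝ := fun u => X.Mplus (i + 1) g u - X.lower (i + 1) g u with hh
  have hM : X.Mplus (i + 1) g t = 0 := X.mplus_ind_zero'
  have hsingle : X.dist (i + 1) t * (h t * h t) ≤ X.ip (i + 1) h h := by
    unfold WSC.ip
    rw [← mul_assoc]
    exact Finset.single_le_sum (f := fun u => X.dist (i + 1) u * h u * h u)
      (fun u _ => by
        show 0 ≤ X.dist (i + 1) u * h u * h u
        rw [mul_assoc]
        exact mul_nonneg (X.dist_nonneg' _ _) (mul_self_nonneg _))
      ht
  have hdistpos : 0 < X.dist (i + 1) t := X.dist_pos' (by omega) ht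
  have hS2 : h t * h t ≤ γ * γ := by
    rw [hgg] at hdx
    have h1 : X.dist (i + 1) t * (h t * h t) ≤ γ ^ 2 * X.dist (i + 1) t :=
      le_trans hsingle hdx
    nlinarith
  have hSht : h t = - X.lower (i + 1) g t := by
    rw [hh]
    simp [hM]
  nlinarith [hS2, hSht, hγ0, sq_nonneg (X.lower (i + 1) g t - γ)]

lemma union_erase' {i : ℕ} {r t : Finset V} (hrc : r.card = i) (htc : t.card = i + 1)
    (hrt : r ⊆ t) {x : V} (hx : x ∈ t) (hne : t.erase x ≠ r) :
    r ∪ t.erase x = t := by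
  have hsub : r ∪ t.erase x ⊆ t := Finset.union_subset hrt (Finset.erase_subset x t)
  have hec : (t.erase x).card = i := by
    rw [Finset.card_erase_of_mem hx, htc]
    omega
  apply Finset.eq_of_subset_of_card_le hsub
  by_contra hlt
  push_neg at hlt
  have hcard_le : (r ∪ t.erase x).card ≤ i := by
    have := Finset.card_le_card hsub
    omega
  have h1 : r ∪ t.erase x = r :=
    (Finset.eq_of_subset_of_card_le Finset.subset_union_left (by omega)).symm
  have h2 : t.erase x ⊆ r := h1 ▸ Finset.subset_union_right
  exact hne (Finset.eq_of_subset_of_card_le h2 (by omega))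

end WSC

/-- Let `X` be a `γ`-HDX, `i ≥ 1`, and `f̃ ∈ C^i` perpendicular
to constants and supported on faces containing a fixed `r ∈ X(i-1)`.  Then
`⟨U_{i-1}D_i f̃, f̃⟩ ≤ ((i+1)/i) γ ‖f̃‖²`. -/
theorem lower_walk_bound {V : Type} [DecidableEq V] [Fintype V] {d : ℕ}
    (X : WSC V d) (γ : ℝ) (hγ0 : 0 ≤ γ) (hX : X.IsHDX γ)
    (i : ℕ) (hi : 1 ≤ i) (hid : i + 1 ≤ d)
    (r : Finset V) (hr : r ∈ X.faces i) (ftil : Finset V → ℝ)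
    (hsupp : ∀ s, ¬(s ∈ X.faces (i + 1) ∧ r ⊆ s) → ftil s = 0)
    (hperp : X.ip (i + 1) ftil (fun _ => 1) = 0) :
    X.ip (i + 1) (X.lower (i + 1) ftil) ftil
      ≤ (((i : ℝ) + 1) / (i : ℝ)) * γ * X.ip (i + 1) ftil ftil := by
  have hrc : r.card = i := X.card_of_mem_faces' hr
  -- the down operator vanishes at r thanks to perpendicularity
  have hdownr : X.down (i + 1) ftil r = 0 := by
    unfold WSC.down
    have hnum : ∑ s ∈ (X.faces (i + 1)).filter (fun s => r ⊆ s),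
        X.dist (i + 1) s * ftil s = 0 := by
      rw [← hperp]
      unfold WSC.ip
      rw [Finset.sum_filter]
      apply Finset.sum_congr rfl
      intro s hs
      by_cases h : r ⊆ s
      · rw [if_pos h]
        simp
      · rw [if_neg h, hsupp s (fun hc => h hc.2)]
        simp
    rw [hnum, zero_div]
  -- key per-face bound
  have key : ∀ t ∈ X.faces (i + 1),
      X.dist (i + 1) t * X.lower (i + 1) ftil t * ftil t
        ≤ γ * (X.dist (i + 1) t * ftil t * ftil t) := by
    intro t htf
    by_cases hf : ftil t = 0
    · simp [hf]
    have hrt : r ⊆ t := by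
      by_contra h
      exact hf (hsupp t (fun hc => h hc.2))
    have htc : t.card = i + 1 := X.card_of_mem_faces' htf
    -- for x ∈ t with t.erase x ≠ r, the down operator at t.erase x sees only t
    have hdownx : ∀ x ∈ t, t.erase x ≠ r →
        X.down (i + 1) ftil (t.erase x)
          = ftil t * (X.dist (i + 1) t / (((i : ℝ) + 1) * X.dist i (t.erase x))) := by
      intro x hx hne
      unfold WSC.down
      rw [Finset.sum_eq_single t]
      · rw [Nat.add_sub_cancel]
        push_cast
        ring
      · intro s hs hst
        by_cases hfs : ftil s = 0
        · rw [hfs, mul_zero]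
        exfalso
        have hsmem : s ∈ X.faces (i + 1) ∧ r ⊆ s := by
          by_contra h
          exact hfs (hsupp s h)
        have hex : t.erase x ⊆ s := (Finset.mem_filter.mp hs).2
        have hu : r ∪ t.erase x = t := WSC.union_erase' hrc htc hrt hx hne
        have hts : t ⊆ s := hu ▸ Finset.union_subset hsmem.2 hex
        have hcard : s.card ≤ t.card := by
          have := X.card_of_mem_faces' hsmem.1
          omega
        exact hst (Finset.eq_of_subset_of_card_le hts hcard).symm
      · intro h
        exact absurd (Finset.mem_filter.mpr ⟨htf, Finset.erase_subset x t⟩) h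
    -- hence lower ftil t = ftil t * c with c the partial return probability
    set q : V → ℝ := fun x => X.dist (i + 1) t / (((i : ℝ) + 1) * X.dist i (t.erase x))
      with hq
    have hqnn : ∀ x, 0 ≤ q x := fun x =>
      div_nonneg (X.dist_nonneg' _ _)
        (mul_nonneg (by positivity) (X.dist_nonneg' _ _))
    set c : ℝ := (∑ x ∈ t.filter (fun x => t.erase x ≠ r), q x) / ((i : ℝ) + 1)
      with hc
    have hlower : X.lower (i + 1) ftil t = ftil t * c := by
      unfold WSC.lower WSC.up
      rw [Nat.add_sub_cancel]
      have hsplit : ∑ x ∈ t, X.down (i + 1) ftil (t.erase x)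
          = ∑ x ∈ t.filter (fun x => t.erase x ≠ r), ftil t * q x := by
        rw [← Finset.sum_filter_add_sum_filter_not t (fun x => t.erase x ≠ r)]
        have h2 : ∑ x ∈ t.filter (fun x => ¬t.erase x ≠ r),
            X.down (i + 1) ftil (t.erase x) = 0 := by
          apply Finset.sum_eq_zero
          intro x hx
          have : t.erase x = r := not_not.mp (Finset.mem_filter.mp hx).2
          rw [this, hdownr]
        rw [h2, add_zero]
        apply Finset.sum_congr rfl
        intro x hx
        obtain ⟨hxt, hne⟩ := Finset.mem_filter.mp hx
        exact hdownx x hxt hne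
      rw [hsplit, hc, ← Finset.mul_sum, mul_div_assoc]
    have hc0 : 0 ≤ c := by
      rw [hc]
      apply div_nonneg (Finset.sum_nonneg fun x _ => hqnn x) (by positivity)
    have hcγ : c ≤ γ := by
      have h1 : c ≤ (∑ x ∈ t, q x) / ((i : ℝ) + 1) := by
        rw [hc]
        apply div_le_div_of_nonneg_right ?_ (by positivity)
        · exact Finset.sum_le_sum_of_subset_of_nonneg (Finset.filter_subset _ _)
            (fun x _ _ => hqnn x)
      have h2 : (∑ x ∈ t, q x) / ((i : ℝ) + 1) ≤ γ := by
        rw [← X.lower_ind' htf]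
        exact X.return_le' γ hγ0 hX hid htf
      linarith
    rw [hlower]
    have hA : 0 ≤ X.dist (i + 1) t * (ftil t * ftil t) :=
      mul_nonneg (X.dist_nonneg' _ _) (mul_self_nonneg _)
    nlinarith [hA, hc0, hcγ]
  -- sum the per-face bounds
  have hsum : X.ip (i + 1) (X.lower (i + 1) ftil) ftil ≤ γ * X.ip (i + 1) ftil ftil := by
    unfold WSC.ip
    rw [Finset.mul_sum]
    apply Finset.sum_le_sum
    intro t ht
    have := key t ht
    linarith [this]
  have hipnn : 0 ≤ X.ip (i + 1) ftil ftil := by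
    unfold WSC.ip
    apply Finset.sum_nonneg
    intro t _
    rw [mul_assoc]
    exact mul_nonneg (X.dist_nonneg' _ _) (mul_self_nonneg _)
  have hfrac : (1 : ℝ) ≤ ((i : ℝ) + 1) / (i : ℝ) := by
    have hipos : (0 : ℝ) < (i : ℝ) := by exact_mod_cast hi
    rw [le_div_iff₀ hipos]
    linarith
  calc X.ip (i + 1) (X.lower (i + 1) ftil) ftil
      ≤ γ * X.ip (i + 1) ftil ftil := hsum
    _ = 1 * γ * X.ip (i + 1) ftil ftil := by ring
    _ ≤ (((i : ℝ) + 1) / (i : ℝ)) * γ * X.ip (i + 1) ftil ftil := by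
        apply mul_le_mul_of_nonneg_right (mul_le_mul_of_nonneg_right hfrac hγ0) hipnn
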